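/- For all real a > 0 and b > 0, ∫_0^∞ e^{−a t} · J_0(b t) dt = 1/√(a² + b²), where J_0(y) = ∑_{m=0}^∞ (−1)^m/(m!·Γ(m+1))·(y/2)^{2m}. -/

import Mathlib

/-!
Termwise integration of the cosine series, using Wallis' integrals `∫₀^π sin^(2m)`, gives Bessel's
integral `J₀(y) = π⁻¹ ∫₀^π cos (y sin θ) dθ`. Exchanging the two integrals (the integrand is
dominated by `e^{-at}`) and using `∫₀^∞ e^{-at} cos (ct) dt = a / (a² + c²)` reduces the claim to
`∫₀^π a / (a² + b² sin² θ) dθ = π / √(a² + b²)`, which follows from the antiderivative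
`arctan (c tan θ) / √(a² + b²)` with `c = √(a² + b²) / a`.
-/

open Real MeasureTheory

/-- The Bessel function of the first kind of order 0, defined by its series. -/
noncomputable def besselJ0 (y : ℝ) : ℝ :=
  ∑' m : ℕ, (-1) ^ m / (m.factorial * Real.Gamma (m + 1)) * (y / 2) ^ (2 * m)

open Set Filter Nat

theorem integral_exp_neg_mul_mul_cos_mul_Ioi {a : ℝ} (ha : 0 < a) (c : ℝ) :
    ∫ t in Ioi 0, exp (-a * t) * cos (c * t) = a / (a ^ 2 + c ^ 2) := by
  have hre : (-a + c * Complex.I).re < 0 := by simpa using ha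
  have hre_exp : ∀ t : ℝ, exp (-a * t) * cos (c * t) =
      (Complex.exp ((-a + c * Complex.I) * t)).re := by
    intro t
    simp [Complex.exp_re]
  simp_rw [hre_exp]
  refine (integral_re (integrableOn_exp_mul_complex_Ioi hre 0)).trans ?_
  rw [integral_exp_mul_complex_Ioi hre]
  simp [Complex.div_re, Complex.normSq_apply, sq]

theorem integral_sin_pow_two_mul (m : ℕ) :
    ∫ x in 0..π, sin x ^ (2 * m) = π * (2 * m)! / (4 ^ m * (m ! : ℝ) ^ 2) := by
  rw [integral_sin_pow_even, mul_div_assoc]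
  congr 1
  induction m with
  | zero => simp
  | succ k ih =>
    rw [Finset.prod_range_succ, ih, show 2 * (k + 1) = 2 * k + 1 + 1 by ring]
    push_cast [factorial_succ]
    field_simp
    ring

theorem integral_cos_series_term (y : ℝ) (m : ℕ) :
    ∫ x in 0..π, (-1) ^ m * (y * sin x) ^ (2 * m) / (2 * m)! =
      π * ((-1) ^ m / (m ! * Gamma (m + 1)) * (y / 2) ^ (2 * m)) := by
  have hsplit : (fun x => (-1) ^ m * (y * sin x) ^ (2 * m) / (2 * m)!) =
      fun x => (-1) ^ m * y ^ (2 * m) / (2 * m)! * sin x ^ (2 * m) := by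
    ext x; ring
  rw [hsplit, intervalIntegral.integral_const_mul, integral_sin_pow_two_mul,
    Gamma_nat_eq_factorial, div_pow, pow_mul 2, show (2 : ℝ) ^ 2 = 4 by norm_num]
  field_simp

theorem hasSum_integral_cos_series (y : ℝ) :
    HasSum (fun m : ℕ => π * ((-1) ^ m / (m ! * Gamma (m + 1)) * (y / 2) ^ (2 * m)))
      (∫ x in 0..π, cos (y * sin x)) := by
  simp_rw [← integral_cos_series_term]
  refine intervalIntegral.hasSum_integral_of_dominated_convergence
    (fun m _ => |y| ^ (2 * m) / (2 * m)!) (fun m => by fun_prop)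
    (fun m => ae_of_all _ fun x _ => ?_)
    (ae_of_all _ fun _ _ => (Real.summable_pow_div_factorial |y|).comp_injective
      (mul_right_injective₀ two_ne_zero))
    intervalIntegrable_const (ae_of_all _ fun x _ => Real.hasSum_cos (y * sin x))
  rw [norm_div, norm_mul, norm_pow, norm_pow, norm_neg, norm_one, one_pow, one_mul,
    Real.norm_natCast, norm_mul]
  gcongr
  exact mul_le_of_le_one_right (abs_nonneg y) (abs_sin_le_one x)

theorem besselJ0_eq_integral_cos_mul_sin (y : ℝ) :
    besselJ0 y = π⁻¹ * ∫ x in 0..π, cos (y * sin x) := by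
  rw [← (hasSum_integral_cos_series y).tsum_eq, tsum_mul_left, besselJ0,
    inv_mul_cancel_left₀ pi_ne_zero]

theorem cos_sq_add_mul_sin_sq_pos {k : ℝ} (hk : 0 < k) (x : ℝ) :
    0 < cos x ^ 2 + k * sin x ^ 2 := by
  rcases (sq_nonneg (sin x)).eq_or_lt with h | h
  · nlinarith [sin_sq_add_cos_sq x]
  · positivity

/-- On `(-π/2, π/2)` this is `arctan (c * tan x)`, by the subtraction formula for `arctan`;
unlike the latter it is smooth across the poles of `tan`. -/
noncomputable def arctanMulTan (c x : ℝ) : ℝ :=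
  x + arctan ((c - 1) * sin x * cos x / (cos x ^ 2 + c * sin x ^ 2))

theorem hasDerivAt_arctanMulTan {c : ℝ} (hc : 0 < c) (x : ℝ) :
    HasDerivAt (arctanMulTan c) (c / (cos x ^ 2 + c ^ 2 * sin x ^ 2)) x := by
  have hD := cos_sq_add_mul_sin_sq_pos hc x
  have hE := cos_sq_add_mul_sin_sq_pos (pow_pos hc 2) x
  have h := (hasDerivAt_id x).add
    (((((hasDerivAt_sin x).const_mul (c - 1)).mul (hasDerivAt_cos x)).div
      (((hasDerivAt_cos x).pow 2).add (((hasDerivAt_sin x).pow 2).const_mul c)) hD.ne').arctan)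
  refine (h.congr_deriv ?_ : HasDerivAt (arctanMulTan c) _ x)
  simp only [Pi.mul_apply, Pi.add_apply, Pi.div_apply, Pi.pow_apply]
  field_simp
  norm_num
  linear_combination c * (cos x ^ 2 + c ^ 2 * sin x ^ 2) * (sin x ^ 2 + cos x ^ 2) *
    sin_sq_add_cos_sq x

theorem integral_div_cos_sq_add_sq_mul_sin_sq {c : ℝ} (hc : 0 < c) :
    ∫ x in 0..π, c / (cos x ^ 2 + c ^ 2 * sin x ^ 2) = π := by
  have hcont : Continuous fun x => c / (cos x ^ 2 + c ^ 2 * sin x ^ 2) :=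
    continuous_const.div (by fun_prop) fun x => (cos_sq_add_mul_sin_sq_pos (pow_pos hc 2) x).ne'
  rw [intervalIntegral.integral_eq_sub_of_hasDerivAt (fun x _ => hasDerivAt_arctanMulTan hc x)
    (hcont.intervalIntegrable 0 π)]
  simp [arctanMulTan]

theorem integral_div_sq_add_mul_sin_sq {a : ℝ} (ha : 0 < a) (b : ℝ) :
    ∫ x in 0..π, a / (a ^ 2 + (b * sin x) ^ 2) = π / √(a ^ 2 + b ^ 2) := by
  set s := √(a ^ 2 + b ^ 2)
  have hs : 0 < s := by positivity
  have hs2 : s ^ 2 = a ^ 2 + b ^ 2 := sq_sqrt (by positivity)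
  have hrw : ∀ x, a / (a ^ 2 + (b * sin x) ^ 2) =
      s⁻¹ * (s / a / (cos x ^ 2 + (s / a) ^ 2 * sin x ^ 2)) := by
    intro x
    have hden : cos x ^ 2 + (s / a) ^ 2 * sin x ^ 2 = (a ^ 2 + (b * sin x) ^ 2) / a ^ 2 := by
      field_simp
      linear_combination sin x ^ 2 * hs2 + a ^ 2 * sin_sq_add_cos_sq x
    have hpos : 0 < a ^ 2 + (b * sin x) ^ 2 := by positivity
    rw [hden]
    field_simp
  simp_rw [hrw]
  rw [intervalIntegral.integral_const_mul, integral_div_cos_sq_add_sq_mul_sin_sq (div_pos hs ha)]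
  field_simp

theorem integrable_exp_neg_mul_mul_cos_prod {a : ℝ} (ha : 0 < a) {ω : ℝ → ℝ} (hω : Measurable ω)
    (ν : Measure ℝ) [IsFiniteMeasure ν] :
    Integrable (fun z : ℝ × ℝ => exp (-a * z.1) * cos (ω z.2 * z.1))
      ((volume.restrict (Ioi 0)).prod ν) := by
  refine ((exp_neg_integrableOn_Ioi 0 ha).mul_prod (integrable_const (1 : ℝ))).mono
    (by fun_prop) (ae_of_all _ fun z => ?_)
  simp only [norm_mul, norm_of_nonneg (exp_pos _).le, mul_one]
  exact mul_le_of_le_one_right (exp_pos _).le (abs_cos_le_one _)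

theorem lipschitz_integral_general (a b : ℝ) (ha : 0 < a) :
    ∫ t in Set.Ioi (0:ℝ), Real.exp (-a * t) * besselJ0 (b * t)
      = 1 / Real.sqrt (a ^ 2 + b ^ 2) := by
  have hJ (t : ℝ) : exp (-a * t) * besselJ0 (b * t) =
      π⁻¹ * ∫ x in Ioc 0 π, exp (-a * t) * cos (b * sin x * t) := by
    rw [besselJ0_eq_integral_cos_mul_sin, intervalIntegral.integral_of_le pi_pos.le,
      integral_const_mul, mul_left_comm]
    simp_rw [mul_right_comm b t]
  calc ∫ t in Ioi 0, exp (-a * t) * besselJ0 (b * t)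
      = π⁻¹ * ∫ t in Ioi 0, ∫ x in Ioc 0 π, exp (-a * t) * cos (b * sin x * t) := by
        simp_rw [hJ, integral_const_mul]
    _ = π⁻¹ * ∫ x in Ioc 0 π, ∫ t in Ioi 0, exp (-a * t) * cos (b * sin x * t) := by
        rw [integral_integral_swap (f := fun t x => exp (-a * t) * cos (b * sin x * t))
          (integrable_exp_neg_mul_mul_cos_prod ha (ω := fun x => b * sin x) (by fun_prop) _)]
    _ = π⁻¹ * ∫ x in 0..π, a / (a ^ 2 + (b * sin x) ^ 2) := by
        simp_rw [integral_exp_neg_mul_mul_cos_mul_Ioi ha, intervalIntegral.integral_of_le pi_pos.le]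
    _ = 1 / √(a ^ 2 + b ^ 2) := by
        rw [integral_div_sq_add_mul_sin_sq ha]
        field_simp

theorem lipschitz_integral (a b : ℝ) (ha : 0 < a) (hb : 0 < b) :
    ∫ t in Set.Ioi (0:ℝ), Real.exp (-a * t) * besselJ0 (b * t)
      = 1 / Real.sqrt (a ^ 2 + b ^ 2) :=
  lipschitz_integral_general a b ha
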